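/- For odd n ≥ 1 with h := (n-1)/2, the fidelity F_n(h) admits the rewriting F_n(h) = 1/2 + ((2δ+1)/2) · Σ_{k=0}^{h} (C(n,k)/C(n,h)) · (n-2k+1)/((n-k+1)(n-2k)) with δ = 0, and consequently satisfies the bounds 1/2 + (1/(2n·C(n,h))) Σ_{k=0}^{h} C(n,k) ≤ F_n(h) ≤ 1/2 + (2/(n·C(n,h))) Σ_{k=0}^{h} C(n,k). -/

import Mathlib

/-- Binomial coefficient `C(n, j)` with integer lower index, with the
convention `C(n, j) = 0` for `j < 0`, valued in `ℚ`. -/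
def ch (n : ℕ) (j : ℤ) : ℚ := if j < 0 then 0 else (n.choose j.toNat : ℚ)

/-- The optimal fidelity of `n`-qubit quantum majority vote on inputs of
Hamming weight `h`. -/
def Fid (n h : ℕ) : ℚ :=
  ∑ k ∈ Finset.range (h + 1),
    ((ch n k - ch n ((k : ℤ) - 1)) / (n.choose h : ℚ))
      * (((n : ℚ) - k - h) / ((n : ℚ) - 2 * k))

/-!
Write `n = 2h + 1`. Then `n - k - h = (n - 2k + 1)/2`, so each factor `(n-k-h)/(n-2k)` equals
`1/2 + 1/(2(n-2k))`. The `1/2`-parts telescope to `1/2`, and by Pascal's rule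
`C(n,k) - C(n,k-1) = C(n,k) (n-2k+1)/(n-k+1)`, which turns the remaining parts into the stated sum.
The bounds follow termwise from `1/n ≤ (n-2k+1)/((n-k+1)(n-2k)) ≤ 4/n` for `2k < n`.
-/

open Finset

lemma ch_natCast (n k : ℕ) : ch n k = n.choose k := by
  simp [ch]

lemma ch_succ_sub_one (n k : ℕ) : ch n (((k + 1 : ℕ) : ℤ) - 1) = n.choose k := by
  simp [ch]

lemma sum_range_ch_sub_ch_pred (n h : ℕ) :
    ∑ k ∈ range (h + 1), (ch n k - ch n ((k : ℤ) - 1)) = n.choose h := by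
  induction h with
  | zero => simp [ch]
  | succ h ih => rw [sum_range_succ, ih, ch_succ_sub_one, ch_natCast]; ring

lemma ch_sub_ch_pred {n k : ℕ} (hk : k ≤ n) :
    ch n k - ch n ((k : ℤ) - 1)
      = n.choose k * ((n : ℚ) - 2 * k + 1) / ((n : ℚ) - k + 1) := by
  have hpos : (0 : ℚ) < (n : ℚ) - k + 1 := by
    have : (k : ℚ) ≤ n := by exact_mod_cast hk
    linarith
  rw [eq_div_iff hpos.ne']
  cases k with
  | zero => simp [ch]
  | succ m =>
    have pascal := congrArg (Nat.cast : ℕ → ℚ) (Nat.choose_succ_right_eq n m)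
    push_cast [Nat.cast_sub (by omega : m ≤ n)] at pascal
    rw [ch_succ_sub_one, ch_natCast]
    push_cast
    linear_combination pascal

section Weight

variable {α : Type*} [Field α] [LinearOrder α] [IsStrictOrderedRing α] {n k : α}

def centralWeight (n k : α) : α := (n - 2 * k + 1) / ((n - k + 1) * (n - 2 * k))

lemma one_div_le_centralWeight (hk : 0 ≤ k) (hkn : 2 * k + 1 ≤ n) :
    1 / n ≤ centralWeight n k := by
  rw [centralWeight, div_le_div_iff₀ (by linarith) (by nlinarith)]
  nlinarith [mul_nonneg hk (by linarith : (0 : α) ≤ n - 2 * k + 2)]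

lemma centralWeight_le_four_div (hk : 0 ≤ k) (hkn : 2 * k + 1 ≤ n) :
    centralWeight n k ≤ 4 / n := by
  rw [centralWeight, div_le_div_iff₀ (by nlinarith) (by linarith)]
  nlinarith [mul_nonneg (by linarith : (0 : α) ≤ n - 2 * k - 1) (by linarith : (0 : α) ≤ n),
    sq_nonneg (n - 2 * k)]

end Weight

lemma fid_central_summand_eq {h k : ℕ} (hk : k ≤ h) :
    (ch (2 * h + 1) k - ch (2 * h + 1) ((k : ℤ) - 1)) / ((2 * h + 1).choose h : ℚ)
        * ((((2 * h + 1 : ℕ) : ℚ) - k - h) / (((2 * h + 1 : ℕ) : ℚ) - 2 * k))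
      = 1 / 2 * ((ch (2 * h + 1) k - ch (2 * h + 1) ((k : ℤ) - 1)) / ((2 * h + 1).choose h : ℚ))
        + 1 / 2 * (((2 * h + 1).choose k : ℚ) / ((2 * h + 1).choose h : ℚ)
          * centralWeight ((2 * h + 1 : ℕ) : ℚ) k) := by
  have hkq : (k : ℚ) ≤ h := by exact_mod_cast hk
  have hC : ((2 * h + 1).choose h : ℚ) ≠ 0 := by
    exact_mod_cast (Nat.choose_pos (by omega : h ≤ 2 * h + 1)).ne'
  have hd : ((2 * h + 1 : ℕ) : ℚ) - 2 * k ≠ 0 := by push_cast; linarith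
  have he : ((2 * h + 1 : ℕ) : ℚ) - k + 1 ≠ 0 := by push_cast; linarith
  rw [ch_sub_ch_pred (by omega : k ≤ 2 * h + 1), centralWeight]
  field_simp
  push_cast
  ring

theorem fid_central_eq (h : ℕ) :
    Fid (2 * h + 1) h
      = 1 / 2 + 1 / 2 * ∑ k ∈ range (h + 1),
          (((2 * h + 1).choose k : ℚ) / ((2 * h + 1).choose h : ℚ))
            * centralWeight ((2 * h + 1 : ℕ) : ℚ) k := by
  have hC : ((2 * h + 1).choose h : ℚ) ≠ 0 := by
    exact_mod_cast (Nat.choose_pos (by omega : h ≤ 2 * h + 1)).ne'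
  unfold Fid
  rw [sum_congr rfl fun k hk => fid_central_summand_eq (mem_range_succ_iff.mp hk),
    sum_add_distrib, ← mul_sum, ← mul_sum, ← sum_div, sum_range_ch_sub_ch_pred, div_self hC,
    mul_one]

lemma sum_choose_div_mul_centralWeight_bounds (h : ℕ) :
    1 / (((2 * h + 1 : ℕ) : ℚ) * (2 * h + 1).choose h)
        * ∑ k ∈ range (h + 1), ((2 * h + 1).choose k : ℚ)
      ≤ ∑ k ∈ range (h + 1),
          (((2 * h + 1).choose k : ℚ) / ((2 * h + 1).choose h : ℚ))
            * centralWeight ((2 * h + 1 : ℕ) : ℚ) k ∧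
    ∑ k ∈ range (h + 1),
          (((2 * h + 1).choose k : ℚ) / ((2 * h + 1).choose h : ℚ))
            * centralWeight ((2 * h + 1 : ℕ) : ℚ) k
      ≤ 4 / (((2 * h + 1 : ℕ) : ℚ) * (2 * h + 1).choose h)
        * ∑ k ∈ range (h + 1), ((2 * h + 1).choose k : ℚ) := by
  have hk : ∀ k ∈ range (h + 1), (0 : ℚ) ≤ k ∧ 2 * (k : ℚ) + 1 ≤ ((2 * h + 1 : ℕ) : ℚ) := by
    intro k hk
    have : (k : ℚ) ≤ h := by exact_mod_cast mem_range_succ_iff.mp hk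
    exact ⟨k.cast_nonneg, by push_cast; linarith⟩
  rw [mul_sum, mul_sum]
  constructor <;> refine sum_le_sum fun k hk' => ?_ <;> obtain ⟨hk0, hkn⟩ := hk k hk'
  · calc 1 / (((2 * h + 1 : ℕ) : ℚ) * (2 * h + 1).choose h) * (2 * h + 1).choose k
        = ((2 * h + 1).choose k : ℚ) / (2 * h + 1).choose h * (1 / ((2 * h + 1 : ℕ) : ℚ)) := by
          ring
      _ ≤ _ := mul_le_mul_of_nonneg_left (one_div_le_centralWeight hk0 hkn) (by positivity)
  · calc _ ≤ ((2 * h + 1).choose k : ℚ) / (2 * h + 1).choose h * (4 / ((2 * h + 1 : ℕ) : ℚ)) :=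
          mul_le_mul_of_nonneg_left (centralWeight_le_four_div hk0 hkn) (by positivity)
      _ = _ := by ring

theorem fid_central_rewriting_and_bounds_general (n : ℕ) (hn : Odd n) :
    Fid n ((n - 1) / 2)
        = 1 / 2 + (1 / 2) * ∑ k ∈ Finset.range ((n - 1) / 2 + 1),
            ((n.choose k : ℚ) / (n.choose ((n - 1) / 2) : ℚ))
              * (((n : ℚ) - 2 * k + 1) / ((((n : ℚ) - k + 1)) * ((n : ℚ) - 2 * k))) ∧
    1 / 2 + (1 / (2 * (n : ℚ) * (n.choose ((n - 1) / 2) : ℚ)))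
        * ∑ k ∈ Finset.range ((n - 1) / 2 + 1), (n.choose k : ℚ)
      ≤ Fid n ((n - 1) / 2) ∧
    Fid n ((n - 1) / 2)
      ≤ 1 / 2 + (2 / ((n : ℚ) * (n.choose ((n - 1) / 2) : ℚ)))
        * ∑ k ∈ Finset.range ((n - 1) / 2 + 1), (n.choose k : ℚ) := by
  obtain ⟨h, rfl⟩ := hn
  rw [show (2 * h + 1 - 1) / 2 = h by omega, fid_central_eq]
  obtain ⟨lower, upper⟩ := sum_choose_div_mul_centralWeight_bounds h
  exact ⟨rfl, by linear_combination (1 / 2 : ℚ) * lower, by linear_combination (1 / 2 : ℚ) * upper⟩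

/-- For odd `n ≥ 1` and `h = (n-1)/2` (i.e. `δ = 0`), the fidelity admits the
rewriting
`F_n(h) = 1/2 + (1/2) Σ_{k=0}^{h} (C(n,k)/C(n,h)) (n-2k+1)/((n-k+1)(n-2k))`
and consequently satisfies
`1/2 + (1/(2n C(n,h))) Σ_{k≤h} C(n,k) ≤ F_n(h) ≤ 1/2 + (2/(n C(n,h))) Σ_{k≤h} C(n,k)`. -/
theorem fid_central_rewriting_and_bounds (n : ℕ) (hn : Odd n) (hn1 : 1 ≤ n) :
    Fid n ((n - 1) / 2)
        = 1 / 2 + (1 / 2) * ∑ k ∈ Finset.range ((n - 1) / 2 + 1),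
            ((n.choose k : ℚ) / (n.choose ((n - 1) / 2) : ℚ))
              * (((n : ℚ) - 2 * k + 1) / ((((n : ℚ) - k + 1)) * ((n : ℚ) - 2 * k))) ∧
    1 / 2 + (1 / (2 * (n : ℚ) * (n.choose ((n - 1) / 2) : ℚ)))
        * ∑ k ∈ Finset.range ((n - 1) / 2 + 1), (n.choose k : ℚ)
      ≤ Fid n ((n - 1) / 2) ∧
    Fid n ((n - 1) / 2)
      ≤ 1 / 2 + (2 / ((n : ℚ) * (n.choose ((n - 1) / 2) : ℚ)))
        * ∑ k ∈ Finset.range ((n - 1) / 2 + 1), (n.choose k : ℚ) :=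
  fid_central_rewriting_and_bounds_general n hn
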